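/- Let G be a finite simple graph in which every vertex has a strict preference list, and let v be a vertex of G with at least one neighbor such that every neighbor u of v ranks v first, i.e., ℓ_u(v) = 1 for all u ∈ N(v). Then every popular matching in G matches v. -/

import Mathlib

open SimpleGraph

universe u

/-- A matching: a set of edges of `G` that are pairwise vertex-disjoint. -/
def IsMatching {W : Type u} (G : SimpleGraph W) (M : Set (Sym2 W)) : Prop :=
  M ⊆ G.edgeSet ∧ ∀ e ∈ M, ∀ e' ∈ M, e ≠ e' → ∀ v : W, v ∈ e → v ∉ e'

/-- `v` is matched by `M`. -/
def Matched {W : Type u} (M : Set (Sym2 W)) (v : W) : Prop := ∃ w : W, s(v, w) ∈ M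

open scoped Classical in
/-- `rank G pref M v = pref v (M(v))`, with the convention `|N(v)|+1` if `v` is unmatched. -/
noncomputable def rank {W : Type u} (G : SimpleGraph W) (pref : W → W → ℕ)
    (M : Set (Sym2 W)) (v : W) : ℕ :=
  if h : ∃ w : W, s(v, w) ∈ M then pref v h.choose else (G.neighborSet v).ncard + 1

/-- The number of vertices preferring `M` over `M'`. -/
noncomputable def vote {W : Type u} (G : SimpleGraph W) (pref : W → W → ℕ)
    (M M' : Set (Sym2 W)) : ℕ :=
  {v : W | rank G pref M v < rank G pref M' v}.ncard

/-- A popular matching: no other matching is more popular. -/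
def IsPopular {W : Type u} (G : SimpleGraph W) (pref : W → W → ℕ) (M : Set (Sym2 W)) : Prop :=
  IsMatching G M ∧
    ∀ M' : Set (Sym2 W), IsMatching G M' → vote G pref M' M ≤ vote G pref M M'

/-- Each vertex has a strict preference list: `pref v` is a bijection from the
neighborhood of `v` onto `{1, …, |N(v)|}`. -/
def HasPref {W : Type u} (G : SimpleGraph W) (pref : W → W → ℕ) : Prop :=
  ∀ v : W, Set.BijOn (pref v) (G.neighborSet v) (Set.Icc 1 (G.neighborSet v).ncard)

/-- The edge `e ∉ M` is labeled `+2` by `label_M` (given rank function `rk`):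
both endpoints prefer each other over their status in `M`. -/
def EdgePlus {W : Type u} (pref : W → W → ℕ) (rk : W → ℕ) (e : Sym2 W) : Prop :=
  ∃ x y : W, e = s(x, y) ∧ pref x y < rk x ∧ pref y x < rk y

/-- The edge `e ∉ M` is labeled `-2` by `label_M` (given rank function `rk`):
both endpoints prefer their status in `M` over each other. -/
def EdgeMinus {W : Type u} (pref : W → W → ℕ) (rk : W → ℕ) (e : Sym2 W) : Prop :=
  ∃ x y : W, e = s(x, y) ∧ rk x < pref x y ∧ rk y < pref y x

/-- The graph `G_M`: the spanning subgraph of `G` consisting of the edges of `M`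
together with the edges not labeled `-2`. -/
def GMgraph {W : Type u} (G : SimpleGraph W) (pref : W → W → ℕ) (M : Set (Sym2 W)) :
    SimpleGraph W where
  Adj x y := G.Adj x y ∧ (s(x, y) ∈ M ∨ ¬ EdgeMinus pref (rank G pref M) s(x, y))
  symm := by
    constructor
    intro x y h
    refine ⟨h.1.symm, ?_⟩
    rw [Sym2.eq_swap]
    exact h.2
  loopless := ⟨fun x h => G.irrefl h.1⟩

/-- Consecutive edges alternate between `M` and non-`M`. -/
def altRel {W : Type u} (M : Set (Sym2 W)) (e e' : Sym2 W) : Prop := e ∈ M ↔ e' ∉ M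

/-- An alternating path (with respect to `M`) in a graph `G'`. -/
def IsAltPath {W : Type u} (M : Set (Sym2 W)) {G' : SimpleGraph W} {x y : W}
    (p : G'.Walk x y) : Prop :=
  p.IsPath ∧ List.Chain' (altRel M) p.edges ∧
    (∀ e, p.edges.head? = some e → e ∉ M → ¬ Matched M x) ∧
    (∀ e, p.edges.getLast? = some e → e ∉ M → ¬ Matched M y)

/-- An alternating cycle (with respect to `M`) in a graph `G'`:
the edges alternate cyclically between `M` and non-`M`. -/
def IsAltCycle {W : Type u} (M : Set (Sym2 W)) {G' : SimpleGraph W} {x : W}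
    (p : G'.Walk x x) : Prop :=
  p.IsCycle ∧ List.Chain' (altRel M) (p.edges ++ p.edges.take 1)

/-- `l` contains at least one edge labeled `+2`. -/
def OnePlusEdge {W : Type u} (pref : W → W → ℕ) (rk : W → ℕ) (l : List (Sym2 W)) : Prop :=
  ∃ e ∈ l, EdgePlus pref rk e

/-- `l` contains at least two edges labeled `+2`. -/
def TwoPlusEdges {W : Type u} (pref : W → W → ℕ) (rk : W → ℕ) (l : List (Sym2 W)) : Prop :=
  ∃ e ∈ l, ∃ e' ∈ l, e ≠ e' ∧ EdgePlus pref rk e ∧ EdgePlus pref rk e'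

/-- A vertex cover. -/
def IsVC {V : Type u} (G : SimpleGraph V) (U : Set V) : Prop :=
  ∀ ⦃x y : V⦄, G.Adj x y → x ∈ U ∨ y ∈ U


/-! If `v` were unmatched in a popular matching `M`, pick a neighbour `u` and let `u` leave its
partner to match `v` instead. Then `v` gains a partner and `u` gets its first choice, while only
the former partner of `u` can lose; the new matching wins the vote two to at most one. -/

section

variable {W : Type u} {G : SimpleGraph W} {pref : W → W → ℕ} {M M' : Set (Sym2 W)}
  {u v x y z : W}

lemma matched_of_mem {e : Sym2 W} (he : e ∈ M) (hx : x ∈ e) : Matched M x := by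
  obtain ⟨y, rfl⟩ := Sym2.mem_iff_exists.mp hx
  exact ⟨y, he⟩

lemma IsMatching.eq_of_mem (hM : IsMatching G M) (hy : s(x, y) ∈ M) (hz : s(x, z) ∈ M) :
    y = z := by
  by_contra hyz
  exact hM.2 _ hy _ hz (fun h => hyz (Sym2.congr_right.mp h)) x (Sym2.mem_mk_left x y)
    (Sym2.mem_mk_left x z)

lemma IsMatching.subsingleton_partners (hM : IsMatching G M) (x : W) :
    {y | s(x, y) ∈ M}.Subsingleton :=
  fun _ hy _ hz => hM.eq_of_mem hy hz

lemma rank_congr (h : ∀ y, s(x, y) ∈ M ↔ s(x, y) ∈ M') :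
    rank G pref M x = rank G pref M' x := by
  have hpred : (fun w => s(x, w) ∈ M) = fun w => s(x, w) ∈ M' := funext fun w => propext (h w)
  unfold rank
  rw [hpred]

lemma rank_of_mem (hM : IsMatching G M) (h : s(x, y) ∈ M) : rank G pref M x = pref x y := by
  have hex : ∃ w, s(x, w) ∈ M := ⟨y, h⟩
  rw [rank, dif_pos hex]
  exact congrArg (pref x) (hM.eq_of_mem hex.choose_spec h)

lemma rank_of_not_matched (h : ¬ Matched M x) :
    rank G pref M x = (G.neighborSet x).ncard + 1 :=
  dif_neg h

lemma HasPref.one_le_pref (hpref : HasPref G pref) (h : G.Adj x y) : 1 ≤ pref x y :=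
  ((hpref x).mapsTo h).1

lemma HasPref.pref_lt_rank_of_not_matched (hpref : HasPref G pref) (h : G.Adj x y)
    (hx : ¬ Matched M x) : pref x y < rank G pref M x := by
  rw [rank_of_not_matched hx]
  exact Nat.lt_succ_of_le ((hpref x).mapsTo h).2

lemma HasPref.pref_lt_rank_of_eq_one (hpref : HasPref G pref) (hM : IsMatching G M)
    (h : G.Adj x y) (h1 : pref x y = 1) (hxy : s(x, y) ∉ M) : pref x y < rank G pref M x := by
  by_cases hx : Matched M x
  · obtain ⟨w, hw⟩ := hx
    rw [rank_of_mem hM hw]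
    have hne : pref x w ≠ pref x y := by
      intro heq
      obtain rfl := (hpref x).injOn (hM.1 hw) h heq
      exact hxy hw
    have : 1 ≤ pref x w := hpref.one_le_pref (hM.1 hw)
    omega
  · exact hpref.pref_lt_rank_of_not_matched h hx

def reassign (M : Set (Sym2 W)) (u v : W) : Set (Sym2 W) :=
  insert s(u, v) {e ∈ M | u ∉ e}

lemma mem_reassign : s(u, v) ∈ reassign M u v :=
  Set.mem_insert _ _

lemma IsMatching.reassign (hM : IsMatching G M) (huv : G.Adj u v) (hv : ¬ Matched M v) :
    IsMatching G (reassign M u v) := by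
  have hdisj : ∀ e ∈ M, u ∉ e → ∀ x ∈ s(u, v), x ∉ e := by
    rintro e he hue x hx hxe
    rcases Sym2.mem_iff.mp hx with rfl | rfl
    · exact hue hxe
    · exact hv (matched_of_mem he hxe)
  refine ⟨?_, ?_⟩
  · rintro e (rfl | ⟨he, -⟩)
    exacts [huv, hM.1 he]
  · rintro e (rfl | ⟨he, hue⟩) e' (rfl | ⟨he', hue'⟩) hee' x hx hx'
    · exact hee' rfl
    · exact hdisj e' he' hue' x hx hx'
    · exact hdisj e he hue x hx' hx
    · exact hM.2 e he e' he' hee' x hx hx'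

lemma rank_reassign_of_ne (hxu : x ≠ u) (hxv : x ≠ v) (hux : s(u, x) ∉ M) :
    rank G pref (reassign M u v) x = rank G pref M x := by
  refine rank_congr fun y => ⟨?_, fun hxy => Or.inr ⟨hxy, ?_⟩⟩
  · rintro (hxy | ⟨hxy, -⟩)
    · rcases Sym2.eq_iff.mp hxy with ⟨rfl, -⟩ | ⟨rfl, -⟩ <;> contradiction
    · exact hxy
  · rintro hu
    rcases Sym2.mem_iff.mp hu with rfl | rfl
    · exact hxu rfl
    · exact hux (Sym2.eq_swap ▸ hxy)

lemma setOf_rank_reassign_ne_subset :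
    {x | rank G pref (reassign M u v) x ≠ rank G pref M x} ⊆ {u, v} ∪ {x | s(u, x) ∈ M} := by
  intro x hx
  by_contra h
  simp only [Set.mem_union, Set.mem_insert_iff, Set.mem_singleton_iff, Set.mem_ofPred_eq,
    not_or] at h
  exact hx (rank_reassign_of_ne h.1.1 h.1.2 h.2)

lemma vote_reassign_le_one (hM : IsMatching G M)
    (hu : rank G pref (reassign M u v) u < rank G pref M u)
    (hv : rank G pref (reassign M u v) v < rank G pref M v) :
    vote G pref M (reassign M u v) ≤ 1 := by
  have hsub : {x | rank G pref M x < rank G pref (reassign M u v) x} ⊆ {x | s(u, x) ∈ M} := by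
    intro x hx
    rcases setOf_rank_reassign_ne_subset hx.ne' with (rfl | rfl) | hux
    · exact absurd hu hx.not_gt
    · exact absurd hv hx.not_gt
    · exact hux
  have hpart := hM.subsingleton_partners u
  calc vote G pref M (reassign M u v) ≤ {x | s(u, x) ∈ M}.ncard :=
        Set.ncard_le_ncard hsub hpart.finite
    _ ≤ 1 := (Set.ncard_le_one hpart.finite).mpr fun _ ha _ hb => hpart ha hb

lemma two_le_vote_reassign (hM : IsMatching G M) (huv : u ≠ v)
    (hu : rank G pref (reassign M u v) u < rank G pref M u)
    (hv : rank G pref (reassign M u v) v < rank G pref M v) :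
    2 ≤ vote G pref (reassign M u v) M := by
  have hfin : {x | rank G pref (reassign M u v) x < rank G pref M x}.Finite :=
    ((Set.toFinite {u, v}).union (hM.subsingleton_partners u).finite).subset
      fun _ hx => setOf_rank_reassign_ne_subset hx.ne
  calc 2 = ({u, v} : Set W).ncard := (Set.ncard_pair huv).symm
    _ ≤ vote G pref (reassign M u v) M :=
      Set.ncard_le_ncard (by rintro x (rfl | rfl) <;> assumption) hfin

end

theorem popular_matches_universally_top_general {W : Type u} (G : SimpleGraph W)
    (pref : W → W → ℕ) (hpref : HasPref G pref) (v : W)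
    (hne : (G.neighborSet v).Nonempty)
    (hfirst : ∀ u ∈ G.neighborSet v, pref u v = 1)
    (M : Set (Sym2 W)) (hM : IsPopular G pref M) :
    Matched M v := by
  by_contra hv
  obtain ⟨u, hvu⟩ := hne
  have huv : G.Adj u v := hvu.symm
  have hM' := hM.1.reassign huv hv
  have hu : rank G pref (reassign M u v) u < rank G pref M u := by
    rw [rank_of_mem hM' mem_reassign]
    exact hpref.pref_lt_rank_of_eq_one hM.1 huv (hfirst u hvu)
      fun h => hv (matched_of_mem h (Sym2.mem_mk_right u v))
  have hv' : rank G pref (reassign M u v) v < rank G pref M v := by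
    rw [rank_of_mem hM' (Sym2.eq_swap ▸ mem_reassign)]
    exact hpref.pref_lt_rank_of_not_matched hvu hv
  have hpop := hM.2 _ hM'
  have hle := vote_reassign_le_one hM.1 hu hv'
  have hge := two_le_vote_reassign hM.1 huv.ne hu hv'
  omega

/-- If a vertex `v` has at least one neighbor and every neighbor of `v` ranks `v`
first, then every popular matching matches `v`. -/
theorem popular_matches_universally_top {W : Type u} [Finite W] (G : SimpleGraph W)
    (pref : W → W → ℕ) (hpref : HasPref G pref) (v : W)
    (hne : (G.neighborSet v).Nonempty)
    (hfirst : ∀ u ∈ G.neighborSet v, pref u v = 1)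
    (M : Set (Sym2 W)) (hM : IsPopular G pref M) :
    Matched M v :=
  popular_matches_universally_top_general G pref hpref v hne hfirst M hM
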